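/- arXiv:1412.8274 — 2 statements merged into one kernel-verified Lean document; each statement's English description precedes it below -/
import Mathlib

section
/- Let g be a non-constant entire function such that g(z)²·g''(z) is identically equal to a nonzero constant ω₀. Then no such g exists; i.e., for any non-constant entire g, g²·g'' is not a nonzero constant. -/
/-!
Since `g² g'' = ω₀ ≠ 0`, `g` has no zeros and `g'² + 2ω₀/g` is a first integral, equal to some
constant `c`. Eliminating `g`, the entire function `h = g'` solves the autonomous equation
`h' = P(h)` with `P = (X² - c)² / (4ω₀)`, and `P(h) = g''` never vanishes. Such an equation
with `deg P ≥ 2` has no entire solution avoiding the zeros of `P`: along a line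
`w(t) = h(0) + t u` that misses those zeros, `ζ(t) = ∫₀ᵗ u / P(w)` solves `h(ζ(t)) = w(t)`
(both sides solve the same ODE), yet `ζ` stays bounded because `1/P(w(t))` is integrable,
while `w(t)` is unbounded.
-/

open Set Filter Metric MeasureTheory Asymptotics Polynomial

noncomputable def lineLift (F : ℂ → ℂ) (w₀ u : ℂ) (t : ℝ) : ℂ :=
  ∫ s in (0 : ℝ)..t, u / F (w₀ + s * u)

section LineLift

variable {h F : ℂ → ℂ} {w₀ u : ℂ}

theorem apply_lineLift (hh : ∀ z, HasDerivAt h (F (h z)) z) (hF : LocallyLipschitz F)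
    (hne : ∀ t : ℝ, F (h 0 + t * u) ≠ 0) {T : ℝ} (hT : 0 ≤ T) :
    h (lineLift F (h 0) u T) = h 0 + T * u := by
  let w : ℝ → ℂ := fun t => h 0 + t * u
  let c : ℝ → ℂ := fun t => u / F (w t)
  have hc : Continuous c := continuous_const.div (hF.continuous.comp (by fun_prop)) hne
  -- both curves solve `y' = F y * c t` with the same initial value
  have hlift : ∀ t, HasDerivAt (fun t => h (lineLift F (h 0) u t))
      (F (h (lineLift F (h 0) u t)) * c t) t :=
    fun t => (hh _).comp t (hc.integral_hasStrictDerivAt 0 t).hasDerivAt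
  have hline : ∀ t, HasDerivAt w (F (w t) * c t) t := by
    intro t
    rw [mul_div_cancel₀ _ (hne t)]
    show HasDerivAt (fun t : ℝ => h 0 + t * u) u t
    simpa using (((hasDerivAt_id t).ofReal_comp).mul_const u).const_add (h 0)
  have hliftc : Continuous fun t => h (lineLift F (h 0) u t) :=
    continuous_iff_continuousAt.2 fun t => (hlift t).continuousAt
  have hwc : Continuous w := by fun_prop
  set s := (fun t => h (lineLift F (h 0) u t)) '' Icc 0 T ∪ w '' Icc 0 T
  have hs : IsCompact s := (isCompact_Icc.image hliftc).union (isCompact_Icc.image hwc)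
  obtain ⟨K, hK⟩ := (hF.locallyLipschitzOn (s := s)).exists_lipschitzOnWith_of_compact hs
  obtain ⟨B, hB⟩ := isCompact_Icc.exists_bound_of_continuousOn hc.continuousOn (s := Icc 0 T)
  have hv : ∀ t ∈ Ico 0 T, LipschitzOnWith (K * B.toNNReal) (fun y => F y * c t) s := by
    intro t ht
    refine LipschitzOnWith.of_dist_le_mul fun x hx y hy => ?_
    have hct : ‖c t‖ ≤ max B 0 := (hB t (Ico_subset_Icc_self ht)).trans (le_max_left _ _)
    calc dist (F x * c t) (F y * c t) = dist (F x) (F y) * ‖c t‖ := by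
          rw [dist_eq_norm, dist_eq_norm, ← sub_mul, norm_mul]
      _ ≤ K * dist x y * max B 0 := by
          gcongr
          exact hK.dist_le_mul x hx y hy
      _ = _ := by rw [NNReal.coe_mul, Real.coe_toNNReal']; ring
  refine ODE_solution_unique_of_mem_Icc_right hv hliftc.continuousOn
    (fun t _ => (hlift t).hasDerivWithinAt) (fun t ht => .inl ⟨t, Ico_subset_Icc_self ht, rfl⟩)
    hwc.continuousOn (fun t _ => (hline t).hasDerivWithinAt)
    (fun t ht => .inr ⟨t, Ico_subset_Icc_self ht, rfl⟩) (by simp [lineLift, w]) ⟨hT, le_rfl⟩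

theorem norm_lineLift_le (hF : IntegrableOn (fun t : ℝ => (F (w₀ + t * u))⁻¹) (Ioi 0))
    {T : ℝ} (hT : 0 ≤ T) :
    ‖lineLift F w₀ u T‖ ≤ ‖u‖ * ∫ t : ℝ in Ioi 0, ‖(F (w₀ + t * u))⁻¹‖ := by
  calc ‖lineLift F w₀ u T‖ ≤ ∫ t in (0 : ℝ)..T, ‖u / F (w₀ + t * u)‖ :=
        intervalIntegral.norm_integral_le_integral_norm hT
    _ = ‖u‖ * ∫ t : ℝ in Ioc 0 T, ‖(F (w₀ + t * u))⁻¹‖ := by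
        rw [intervalIntegral.integral_of_le hT, ← integral_const_mul]
        simp [div_eq_mul_inv]
    _ ≤ ‖u‖ * ∫ t : ℝ in Ioi 0, ‖(F (w₀ + t * u))⁻¹‖ := by
        gcongr
        exacts [.of_forall fun _ => norm_nonneg _, hF.norm, Ioc_subset_Ioi_self]

theorem not_integrableOn_inv_comp_line (hh : ∀ z, HasDerivAt h (F (h z)) z)
    (hF : LocallyLipschitz F) (hu : u ≠ 0) (hne : ∀ t : ℝ, F (h 0 + t * u) ≠ 0) :
    ¬ IntegrableOn (fun t : ℝ => (F (h 0 + t * u))⁻¹) (Ioi 0) := by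
  intro hint
  have hhc : Continuous h := continuous_iff_continuousAt.2 fun z => (hh z).continuousAt
  obtain ⟨M, hM⟩ := (isCompact_closedBall (0 : ℂ) (‖u‖ * ∫ t : ℝ in Ioi 0,
    ‖(F (h 0 + t * u))⁻¹‖)).exists_bound_of_continuousOn hhc.continuousOn
  set T := (|M| + ‖h 0‖ + 1) / ‖u‖
  have hT : 0 ≤ T := by positivity
  have hbound : ‖h 0 + T * u‖ ≤ M := by
    rw [← apply_lineLift hh hF hne hT]
    exact hM _ (mem_closedBall_zero_iff.2 (norm_lineLift_le hint hT))
  have hTu : ‖(T : ℂ) * u‖ = |M| + ‖h 0‖ + 1 := by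
    rw [norm_mul, Complex.norm_real, Real.norm_of_nonneg hT,
      div_mul_cancel₀ _ (norm_ne_zero_iff.2 hu)]
  have := norm_sub_norm_le ((T : ℂ) * u) (-h 0)
  rw [sub_neg_eq_add, add_comm, norm_neg] at this
  linarith [le_abs_self M]

end LineLift

theorem integrableOn_inv_eval_line {P : ℂ[X]} (hP : 2 ≤ P.natDegree) {w₀ u : ℂ} (hu : u ≠ 0)
    (hne : ∀ t : ℝ, P.eval (w₀ + t * u) ≠ 0) :
    IntegrableOn (fun t : ℝ => (P.eval (w₀ + t * u))⁻¹) (Ioi 0) := by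
  set Q := P.comp (C u * X + C w₀)
  have hQdeg : 2 ≤ Q.natDegree := by rwa [natDegree_comp, natDegree_linear hu, mul_one]
  have hQ : (X ^ 2 : ℂ[X]).degree ≤ Q.degree := by
    rw [degree_X_pow, degree_eq_natDegree (ne_zero_of_natDegree_gt hQdeg)]
    exact_mod_cast hQdeg
  have hsq : (fun t : ℝ => (t : ℂ) ^ 2) =O[atTop] fun t : ℝ => P.eval (w₀ + t * u) := by
    refine ((isBigO_cobounded_of_degree_le hQ).comp_tendsto
      (RCLike.tendsto_ofReal_atTop_cobounded ℂ)).congr (fun t => by simp) (fun t => ?_)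
    simp [Q, add_comm w₀, mul_comm u]
  have hinv : (fun t : ℝ => (P.eval (w₀ + t * u))⁻¹) =O[atTop] fun t : ℝ => t ^ (-2 : ℝ) := by
    refine (hsq.inv_rev ((eventually_gt_atTop 0).mono fun t ht h => ?_)).trans ?_
    · exact absurd h (pow_ne_zero 2 (Complex.ofReal_ne_zero.2 ht.ne'))
    · refine IsBigO.of_bound 1 ((eventually_gt_atTop 0).mono fun t ht => ?_)
      rw [norm_inv, norm_pow, Complex.norm_real, Real.norm_of_nonneg ht.le,
        Real.norm_of_nonneg (by positivity), Real.rpow_neg ht.le, one_mul]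
      norm_cast
  refine (LocallyIntegrableOn.integrableOn_of_isBigO_atTop
    ((Continuous.locallyIntegrable ?_).locallyIntegrableOn _) hinv ?_).mono_set Ioi_subset_Ici_self
  · exact (P.continuous.comp (by fun_prop : Continuous fun t : ℝ => w₀ + t * u)).inv₀ hne
  · exact ⟨Ioi 1, Ioi_mem_atTop 1, integrableOn_Ioi_rpow_of_lt (by norm_num) one_pos⟩

theorem exists_ne_zero_forall_add_mul_notMem {S : Set ℂ} (hS : S.Finite) {w₀ : ℂ}
    (hw : w₀ ∉ S) : ∃ u ≠ 0, ∀ t : ℝ, w₀ + t * u ∉ S := by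
  by_contra! H
  have hdir : ∀ n : ℕ, (n + Complex.I : ℂ) ≠ 0 := fun n h => by
    simpa using congrArg Complex.im h
  choose t ht using fun n : ℕ => H _ (hdir n)
  have : Finite S := hS.to_subtype
  -- distinct directions `n + i` meet `S` in distinct points
  refine not_injective_infinite_finite (fun n => (⟨_, ht n⟩ : S)) fun n m hnm => ?_
  have hnm : t n * (n + Complex.I) = t m * (m + Complex.I) := by
    simpa using congrArg Subtype.val hnm
  have him : t n = t m := by simpa using congrArg Complex.im hnm
  have hre : t n * n = t m * m := by simpa using congrArg Complex.re hnm
  have htn : t n ≠ 0 := fun h0 => hw (by simpa [h0] using ht n)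
  rw [← him] at hre
  exact_mod_cast mul_left_cancel₀ htn hre

theorem exists_eval_eq_zero_of_deriv_eq_eval {h : ℂ → ℂ} (hh : Differentiable ℂ h) {P : ℂ[X]}
    (hP : 2 ≤ P.natDegree) (hder : ∀ z, deriv h z = P.eval (h z)) : ∃ z, P.eval (h z) = 0 := by
  by_contra! hne
  have hroots : {w | P.eval w = 0}.Finite := finite_setOfPred_isRoot (ne_zero_of_natDegree_gt hP)
  obtain ⟨u, hu, hline⟩ := exists_ne_zero_forall_add_mul_notMem hroots (hne 0)
  exact not_integrableOn_inv_comp_line (F := fun w => P.eval w)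
    (fun z => hder z ▸ (hh z).hasDerivAt) (P.differentiable.contDiff (n := 1)).locallyLipschitz
    hu hline (integrableOn_inv_eval_line hP hu hline)

theorem deriv_sq_add_div_eq {g : ℂ → ℂ} (hg : Differentiable ℂ g) (hg0 : ∀ z, g z ≠ 0) {ω : ℂ}
    (hg'' : ∀ z, deriv (deriv g) z = ω / g z ^ 2) (z : ℂ) :
    deriv g z ^ 2 + 2 * ω / g z = deriv g 0 ^ 2 + 2 * ω / g 0 := by
  have hE : ∀ z, HasDerivAt (fun z => deriv g z ^ 2 + 2 * ω / g z) 0 z := by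
    intro z
    refine ((hg.deriv z).hasDerivAt.fun_pow 2 |>.add
      ((hasDerivAt_const z (2 * ω)).div (hg z).hasDerivAt (hg0 z))).congr_deriv ?_
    rw [hg'' z]
    field_simp [hg0 z]
    ring
  exact is_const_of_deriv_eq_zero (fun z => (hE z).differentiableAt) (fun z => (hE z).deriv) z 0

theorem stmt11_general (g : ℂ → ℂ) (hg : Differentiable ℂ g)
    (ω₀ : ℂ) (hω₀ : ω₀ ≠ 0) :
    ¬ ∀ z : ℂ, (g z) ^ 2 * iteratedDeriv 2 g z = ω₀ := by
  intro hid
  have hg0 : ∀ z, g z ≠ 0 := fun z h0 => hω₀ (by simpa [h0] using (hid z).symm)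
  have hg'' : ∀ z, deriv (deriv g) z = ω₀ / g z ^ 2 := fun z => by
    rw [eq_div_iff (pow_ne_zero 2 (hg0 z)), mul_comm, ← hid z, iteratedDeriv_succ,
      iteratedDeriv_one]
  set c := deriv g 0 ^ 2 + 2 * ω₀ / g 0
  set P : ℂ[X] := C (4 * ω₀)⁻¹ * (X ^ 2 - C c) ^ 2
  have hP : P.natDegree = 4 := by
    rw [natDegree_C_mul (by simpa using hω₀), natDegree_pow, natDegree_X_pow_sub_C]
  have hPg : ∀ z, P.eval (deriv g z) = ω₀ / g z ^ 2 := fun z => by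
    have hsq : deriv g z ^ 2 - c = -(2 * ω₀ / g z) := by
      linear_combination deriv_sq_add_div_eq hg hg0 hg'' z
    simp only [P, eval_mul, eval_C, eval_pow, eval_sub, eval_X, hsq]
    field_simp [hg0 z]
    ring
  obtain ⟨z, hz⟩ := exists_eval_eq_zero_of_deriv_eq_eval hg.deriv (by rw [hP]; norm_num)
    fun z => (hg'' z).trans (hPg z).symm
  exact div_ne_zero hω₀ (pow_ne_zero 2 (hg0 z)) ((hPg z).symm.trans hz)

/-- There is no non-constant entire function `g` with `g² g''` identically equal
to a nonzero constant. -/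
theorem stmt11 (g : ℂ → ℂ) (hg : Differentiable ℂ g)
    (hnc : ¬ ∃ c : ℂ, ∀ z, g z = c) (ω₀ : ℂ) (hω₀ : ω₀ ≠ 0) :
    ¬ ∀ z : ℂ, (g z) ^ 2 * iteratedDeriv 2 g z = ω₀ :=
  stmt11_general g hg ω₀ hω₀
end

section
/- Let f be a rational function of the form f(z) = A·∏(z−a_i)^{m_i} (a non-constant polynomial) with every m_i ≥ k ≥ 2, and let n₀ ≥ 2, n_k ≥ 1. Then for any nonzero complex ω, the polynomial M[f] − ω has at least two distinct zeros in ℂ. -/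
/-! `P = M[f]` is divisible by `f`, which has a root `b` of multiplicity `≥ k ≥ 2`, so
`P(b) = P'(b) = 0`. If `P - ω` had a single root `z₀`, then `P - ω = c (X - z₀)^d` with
`d ≥ 2`, so `P'` vanishes only at `z₀`; hence `b = z₀` and `0 = P(b) = ω`. -/

open Finset Polynomial

namespace Polynomial

theorem iterate_derivative_ne_zero {R : Type*} [CommRing R] [IsDomain R] [CharZero R]
    {p : R[X]} (hp : p ≠ 0) {j : ℕ} (hj : j ≤ p.natDegree) : derivative^[j] p ≠ 0 := by
  intro h
  have hcoeff := congrArg (coeff · (p.natDegree - j)) h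
  simp only [coeff_iterate_derivative, Nat.sub_add_cancel hj, coeff_zero, nsmul_eq_mul,
    mul_eq_zero, Nat.cast_eq_zero, Nat.descFactorial_eq_zero_iff_lt, coeff_natDegree,
    leadingCoeff_eq_zero] at hcoeff
  exact hcoeff.elim (absurd · hj.not_gt) hp

section IsAlgClosed

variable {K : Type*} [Field K] [IsAlgClosed K]

theorem eq_C_mul_X_sub_C_pow_of_forall_mem_roots {G : K[X]} {z₀ : K}
    (h : ∀ z ∈ G.roots, z = z₀) : G = C G.leadingCoeff * (X - C z₀) ^ G.natDegree := by
  have hsplits := IsAlgClosed.splits G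
  have hroots : G.roots = Multiset.replicate G.natDegree z₀ :=
    Multiset.eq_replicate.mpr ⟨splits_iff_card_roots.mp hsplits, h⟩
  conv_lhs => rw [hsplits.eq_prod_roots, hroots]
  simp [Multiset.prod_replicate]

theorem exists_ne_eval_eq_of_sq_dvd [CharZero K] {P : K[X]} (hP : P ≠ 0)
    {b : K} (hb : (X - C b) ^ 2 ∣ P) {ω : K} (hω : ω ≠ 0) :
    ∃ z₁ z₂, z₁ ≠ z₂ ∧ P.eval z₁ = ω ∧ P.eval z₂ = ω := by
  obtain ⟨hPb, hP'b⟩ : P.eval b = 0 ∧ (derivative P).eval b = 0 :=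
    (one_lt_rootMultiplicity_iff_isRoot hP).mp <| (le_rootMultiplicity_iff hP).mpr hb
  set G := P - C ω
  have hG_eval (z : K) : G.eval z = 0 ↔ P.eval z = ω := by simp [G, sub_eq_zero]
  have hG0 : G ≠ 0 := fun h => hω (by simpa [G, hPb] using congrArg (eval b) h)
  set d := G.natDegree
  have hd : 2 ≤ d := by simpa [d, G, natDegree_sub_C] using natDegree_le_of_dvd hb hP
  obtain ⟨z₀, hz₀⟩ := IsAlgClosed.exists_root G (by
    rw [degree_eq_natDegree hG0]; exact_mod_cast (by omega : d ≠ 0))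
  by_contra! hunique
  have hG : G = C G.leadingCoeff * (X - C z₀) ^ d :=
    eq_C_mul_X_sub_C_pow_of_forall_mem_roots fun z hz => by
      by_contra hne
      exact hunique z z₀ hne ((hG_eval z).mp ((mem_roots hG0).mp hz)) ((hG_eval z₀).mp hz₀)
  have hG'b : G.leadingCoeff * d * (b - z₀) ^ (d - 1) = 0 := by
    have : (derivative G).eval b = 0 := by simpa [G] using hP'b
    rw [hG] at this
    simpa [derivative_X_sub_C_pow, mul_assoc] using this
  have hbz₀ : b = z₀ := by
    have hc : G.leadingCoeff * d ≠ 0 :=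
      mul_ne_zero (leadingCoeff_ne_zero.mpr hG0) (Nat.cast_ne_zero.mpr (by omega))
    exact sub_eq_zero.mp <| (pow_eq_zero_iff (by omega)).mp <|
      (mul_eq_zero.mp hG'b).resolve_left hc
  exact hω <| ((hG_eval z₀).mp hz₀).symm.trans (hbz₀ ▸ hPb)

end IsAlgClosed

/-- The differential monomial `M[F] = F^{n₀} (F')^{n₁} ⋯ (F^{(k)})^{n_k}`. -/
noncomputable def differentialMonomial {R : Type*} [CommSemiring R] (k : ℕ) (n : ℕ → ℕ)
    (F : R[X]) : R[X] :=
  ∏ j ∈ range (k + 1), (derivative^[j] F) ^ n j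

theorem differentialMonomial_ne_zero {R : Type*} [CommRing R] [IsDomain R] [CharZero R]
    {k : ℕ} (n : ℕ → ℕ) {F : R[X]} (hF : F ≠ 0) (hk : k ≤ F.natDegree) :
    differentialMonomial k n F ≠ 0 :=
  prod_ne_zero_iff.mpr fun _ hj => pow_ne_zero _ <|
    iterate_derivative_ne_zero hF <| (Nat.lt_succ_iff.mp (mem_range.mp hj)).trans hk

theorem dvd_differentialMonomial {R : Type*} [CommSemiring R] (k : ℕ) {n : ℕ → ℕ}
    (hn : n 0 ≠ 0) (F : R[X]) : F ∣ differentialMonomial k n F :=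
  (dvd_pow_self F hn).trans <|
    dvd_prod_of_mem (fun j => (derivative^[j] F) ^ n j) (mem_range.mpr k.succ_pos)

theorem iteratedDeriv_eval {𝕜 : Type*} [NontriviallyNormedField 𝕜] (p : 𝕜[X]) (j : ℕ) :
    iteratedDeriv j (fun x => p.eval x) = fun x => (derivative^[j] p).eval x := by
  induction j with
  | zero => simp
  | succ j ih =>
    ext x
    rw [iteratedDeriv_succ, ih, Function.iterate_succ_apply', Polynomial.deriv]

theorem eval_differentialMonomial {𝕜 : Type*} [NontriviallyNormedField 𝕜] (k : ℕ)
    (n : ℕ → ℕ) (F : 𝕜[X]) (z : 𝕜) :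
    (differentialMonomial k n F).eval z
      = ∏ j ∈ range (k + 1), iteratedDeriv j (fun x => F.eval x) z ^ n j := by
  simp [differentialMonomial, eval_prod, iteratedDeriv_eval]

end Polynomial

theorem stmt15_general (k s : ℕ) (n : ℕ → ℕ) (hk : 2 ≤ k) (hs : 1 ≤ s)
    (hn0 : 2 ≤ n 0)
    (A ω : ℂ) (hA : A ≠ 0) (hω : ω ≠ 0)
    (a : ℕ → ℂ) (m : ℕ → ℕ)
    (hm : ∀ i < s, k ≤ m i)
    (f : ℂ → ℂ)
    (hf : ∀ z, f z = A * ∏ i ∈ Finset.range s, (z - a i) ^ (m i)) :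
    ∃ z₁ z₂ : ℂ, z₁ ≠ z₂ ∧
      ∏ j ∈ Finset.range (k + 1), (iteratedDeriv j f z₁) ^ (n j) = ω ∧
      ∏ j ∈ Finset.range (k + 1), (iteratedDeriv j f z₂) ^ (n j) = ω := by
  set F : ℂ[X] := C A * ∏ i ∈ range s, (X - C (a i)) ^ m i
  have hfF : f = fun z => F.eval z := funext fun z => by simp [hf, F, eval_prod]
  have hF : F ≠ 0 :=
    mul_ne_zero (C_ne_zero.mpr hA) <|
      prod_ne_zero_iff.mpr fun _ _ => pow_ne_zero _ (X_sub_C_ne_zero _)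
  have hroot : (X - C (a 0)) ^ m 0 ∣ F := (dvd_prod_of_mem _ (mem_range.mpr hs)).mul_left _
  have hdeg : k ≤ F.natDegree :=
    (hm 0 hs).trans (by simpa using natDegree_le_of_dvd hroot hF)
  have hsq : (X - C (a 0)) ^ 2 ∣ differentialMonomial k n F :=
    (pow_dvd_pow _ (hk.trans (hm 0 hs))).trans <|
      hroot.trans (dvd_differentialMonomial k (by omega) F)
  obtain ⟨z₁, z₂, hne, h₁, h₂⟩ :=
    exists_ne_eval_eq_of_sq_dvd (differentialMonomial_ne_zero n hF hdeg) hsq hω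
  rw [eval_differentialMonomial, ← hfF] at h₁ h₂
  exact ⟨z₁, z₂, hne, h₁, h₂⟩

/-- If `f(z) = A ∏ (z - a_i)^{m_i}` is a non-constant polynomial with distinct
roots `a_i`, each of multiplicity `m_i ≥ k ≥ 2`, and `n₀ ≥ 2`, `n_k ≥ 1`, then
for any `ω ≠ 0` the function `M[f] - ω` has at least two distinct zeros. -/
theorem stmt15 (k s : ℕ) (n : ℕ → ℕ) (hk : 2 ≤ k) (hs : 1 ≤ s)
    (hn0 : 2 ≤ n 0) (hnk : 1 ≤ n k)
    (A ω : ℂ) (hA : A ≠ 0) (hω : ω ≠ 0)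
    (a : ℕ → ℂ) (m : ℕ → ℕ)
    (ha : ∀ i < s, ∀ j < s, a i = a j → i = j)
    (hm : ∀ i < s, k ≤ m i)
    (f : ℂ → ℂ)
    (hf : ∀ z, f z = A * ∏ i ∈ Finset.range s, (z - a i) ^ (m i)) :
    ∃ z₁ z₂ : ℂ, z₁ ≠ z₂ ∧
      ∏ j ∈ Finset.range (k + 1), (iteratedDeriv j f z₁) ^ (n j) = ω ∧
      ∏ j ∈ Finset.range (k + 1), (iteratedDeriv j f z₂) ^ (n j) = ω :=
  stmt15_general k s n hk hs hn0 A ω hA hω a m hm f hf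
end
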